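/- Let r : ℝ → ℝ be a polynomial. Then for every positive integer K there exist rational functions r̃_1, ..., r̃_K such that r(log(n-1)) - r(log n) = Σ_{i=1}^K r̃_i(log n)/n^i + o(1/n^K) as n → ∞, with r̃_1(x) = -r'(x) and r̃_2(x) = (r''(x) - r'(x))/2. -/

import Mathlib

/-!
Write `log (n - 1) = log n + t` with `t = log (1 - 1/n)`. Taylor's formula for `r` at `log n` gives
`r (log n + t) = ∑ⱼ (r⁽ʲ⁾ (log n) / j!) tʲ`, and `t = L (1/n) + O(n^(-M-1))` for the Taylor
polynomial `L x = -∑_{k ≤ M} xᵏ / k` of `log (1 - x)`. Replacing `tʲ` by the truncation of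
`L (1/n) ^ j` after degree `K` costs `O(n^(-K-1))`, and the factors `r⁽ʲ⁾ (log n)` are `o(n)`,
so the error is `o(n^(-K))`. Collecting powers of `1/n` gives `r̃ᵢ = ∑ⱼ [xⁱ] (L ^ j) · r⁽ʲ⁾ / j!`;
since `L = -x - x² / 2 + O(x³)`, `r̃₁ = -r'` and `r̃₂ = (r'' - r') / 2`.
-/

open Real Filter Asymptotics Polynomial Topology

namespace Polynomial

theorem eval_add_eq_sum_hasseDeriv {R : Type*} [CommSemiring R] (r : R[X]) (x u : R) :
    r.eval (x + u) = ∑ j ∈ Finset.range (r.natDegree + 1), (hasseDeriv j r).eval x * u ^ j := by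
  rw [add_comm, ← taylor_eval, eval_eq_sum_range, natDegree_taylor]
  simp only [taylor_coeff]

theorem two_smul_hasseDeriv_two {R : Type*} [CommSemiring R] (r : R[X]) :
    2 • hasseDeriv 2 r = derivative (derivative r) := by
  simpa using congrFun (factorial_smul_hasseDeriv (R := R) (k := 2)) r

section CoeffPow

variable {R : Type*} [CommSemiring R] {p : R[X]}

theorem coeff_pow_eq_zero_of_lt (hp : p.coeff 0 = 0) {i j : ℕ} (h : i < j) :
    (p ^ j).coeff i = 0 :=
  X_pow_dvd_iff.mp (pow_dvd_pow_of_dvd (X_dvd_iff.mpr hp) j) i h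

theorem coeff_pow_self (hp : p.coeff 0 = 0) (j : ℕ) : (p ^ j).coeff j = p.coeff 1 ^ j := by
  obtain ⟨q, rfl⟩ := X_dvd_iff.mpr hp
  rw [mul_pow, coeff_X_pow_mul', if_pos le_rfl, Nat.sub_self, coeff_zero_eq_eval_zero,
    eval_pow, ← coeff_zero_eq_eval_zero, coeff_X_mul]

end CoeffPow

theorem isBigO_eval_sub_sum_range {𝕜 : Type*} [NormedField 𝕜] (p : 𝕜[X]) (K : ℕ) :
    (fun x => p.eval x - ∑ i ∈ Finset.range (K + 1), p.coeff i * x ^ i)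
      =O[𝓝 0] fun x => x ^ (K + 1) := by
  set t := ∑ i ∈ Finset.range (K + 1), C (p.coeff i) * X ^ i
  obtain ⟨q, hq⟩ : X ^ (K + 1) ∣ p - t := X_pow_dvd_iff.mpr fun d hd => by
    simp [t, Finset.mem_range.mpr hd]
  have hq_bdd : (fun x => q.eval x) =O[𝓝 0] fun _ => (1 : 𝕜) :=
    q.continuous.continuousAt.tendsto.isBigO_one 𝕜
  refine ((isBigO_refl (fun x : 𝕜 => x ^ (K + 1)) _).mul hq_bdd).congr (fun x => ?_) (by simp)
  simpa [t, eval_finsetSum] using (congrArg (eval x) hq).symm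

-- The coefficient of `x ^ i` in `r (y + L x)`, as a polynomial in `y`.
noncomputable def addCompCoeff {R : Type*} [CommSemiring R] (r L : R[X]) (i : ℕ) : R[X] :=
  ∑ j ∈ Finset.range (r.natDegree + 1), C ((L ^ j).coeff i) * hasseDeriv j r

theorem eval_add_sub_sum_addCompCoeff {R : Type*} [CommRing R] (r L : R[X]) (K : ℕ) (y u x : R) :
    r.eval (y + u) - ∑ i ∈ Finset.range (K + 1), (addCompCoeff r L i).eval y * x ^ i =
      ∑ j ∈ Finset.range (r.natDegree + 1), (hasseDeriv j r).eval y *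
        (u ^ j - ∑ i ∈ Finset.range (K + 1), (L ^ j).coeff i * x ^ i) := by
  simp only [eval_add_eq_sum_hasseDeriv, addCompCoeff, eval_finsetSum, eval_mul, eval_C,
    Finset.sum_mul, mul_sub, Finset.mul_sum, Finset.sum_sub_distrib]
  rw [Finset.sum_comm]
  simp only [mul_comm, mul_assoc]

section AddCompCoeff

variable {R : Type*} [CommSemiring R] (r : R[X]) {L : R[X]}

theorem addCompCoeff_zero (hL : L.coeff 0 = 0) : addCompCoeff r L 0 = r := by
  rw [addCompCoeff, Finset.sum_eq_single_of_mem 0 (by simp)]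
  · simp
  · intro j _ hj
    rw [coeff_pow_eq_zero_of_lt hL (Nat.pos_of_ne_zero hj), C_0, zero_mul]

theorem addCompCoeff_one (hL : L.coeff 0 = 0) :
    addCompCoeff r L 1 = C (L.coeff 1) * derivative r := by
  rw [addCompCoeff, Finset.sum_eq_single 1]
  · rw [pow_one, hasseDeriv_one']
  · intro j _ hj
    rcases Nat.lt_or_gt_of_ne hj with h | h
    · simp [Nat.lt_one_iff.mp h, coeff_one]
    · rw [coeff_pow_eq_zero_of_lt hL h, C_0, zero_mul]
  · intro h
    rw [hasseDeriv_eq_zero_of_lt_natDegree r 1 (by simpa using h), mul_zero]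

theorem addCompCoeff_two (hL : L.coeff 0 = 0) :
    addCompCoeff r L 2 = C (L.coeff 2) * derivative r + C (L.coeff 1 ^ 2) * hasseDeriv 2 r := by
  rw [addCompCoeff, Finset.sum_eq_add 1 2 (by norm_num)]
  · rw [pow_one, hasseDeriv_one', coeff_pow_self hL]
  · intro j _ hj
    rcases Nat.lt_or_gt_of_ne hj.1 with h | h
    · simp [Nat.lt_one_iff.mp h, coeff_one]
    · rw [coeff_pow_eq_zero_of_lt hL (by omega), C_0, zero_mul]
  · intro h
    rw [hasseDeriv_eq_zero_of_lt_natDegree r 1 (by simp at h; omega), mul_zero]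
  · intro h
    rw [hasseDeriv_eq_zero_of_lt_natDegree r 2 (by simp at h; omega), mul_zero]

end AddCompCoeff

end Polynomial

noncomputable def logOneSubTaylor (M : ℕ) : ℝ[X] :=
  -∑ k ∈ Finset.range M, C (1 / (k + 1 : ℝ)) * X ^ (k + 1)

theorem eval_logOneSubTaylor (M : ℕ) (x : ℝ) :
    (logOneSubTaylor M).eval x = -∑ k ∈ Finset.range M, x ^ (k + 1) / (k + 1) := by
  simp [logOneSubTaylor, eval_finsetSum, div_eq_inv_mul]

theorem coeff_logOneSubTaylor_zero (M : ℕ) : (logOneSubTaylor M).coeff 0 = 0 := by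
  simp [logOneSubTaylor, coeff_X_pow]

theorem coeff_logOneSubTaylor_succ {M i : ℕ} (h : i < M) :
    (logOneSubTaylor M).coeff (i + 1) = -1 / (i + 1) := by
  simp [logOneSubTaylor, coeff_X_pow, h, neg_div]

theorem isBigO_log_one_sub_sub_logOneSubTaylor (M : ℕ) :
    (fun x => log (1 - x) - (logOneSubTaylor M).eval x) =O[𝓝 0] fun x => x ^ (M + 1) := by
  refine IsBigO.of_bound 2 ?_
  filter_upwards [Metric.ball_mem_nhds (0 : ℝ) one_half_pos] with x hx
  rw [Metric.mem_ball, dist_zero_right, Real.norm_eq_abs] at hx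
  have hx1 : 0 < 1 - |x| := by linarith
  calc ‖log (1 - x) - (logOneSubTaylor M).eval x‖
      = |∑ i ∈ Finset.range M, x ^ (i + 1) / (i + 1) + log (1 - x)| := by
        rw [eval_logOneSubTaylor, sub_neg_eq_add, add_comm, Real.norm_eq_abs]
    _ ≤ |x| ^ (M + 1) / (1 - |x|) := abs_log_sub_add_sum_range_le (by linarith) M
    _ ≤ 2 * ‖x ^ (M + 1)‖ := by
        rw [div_le_iff₀ hx1, norm_pow, Real.norm_eq_abs]
        nlinarith [pow_nonneg (abs_nonneg x) (M + 1)]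

theorem Asymptotics.IsBigO.pow_sub_pow {α 𝕜 : Type*} [NormedField 𝕜] {l : Filter α}
    {f g : α → 𝕜} {h : α → ℝ} (hf : f =O[l] fun _ => (1 : ℝ))
    (hg : g =O[l] fun _ => (1 : ℝ))
    (hfg : (fun x => f x - g x) =O[l] h) (j : ℕ) :
    (fun x => f x ^ j - g x ^ j) =O[l] h := by
  have hsum : (fun x => ∑ i ∈ Finset.range j, f x ^ i * g x ^ (j - 1 - i)) =O[l]
      fun _ => (1 : ℝ) :=
    IsBigO.fun_sum fun i _ => by simpa using (hf.pow i).mul (hg.pow (j - 1 - i))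
  simpa [geom_sum₂_mul] using hsum.mul hfg

theorem isBigO_log_one_sub_pow_sub_sum {K M : ℕ} (hKM : K ≤ M) (j : ℕ) :
    (fun x => log (1 - x) ^ j -
        ∑ i ∈ Finset.range (K + 1), (logOneSubTaylor M ^ j).coeff i * x ^ i)
      =O[𝓝 0] fun x => x ^ (K + 1) := by
  have hlog : (fun x => log (1 - x)) =O[𝓝 0] fun _ => (1 : ℝ) :=
    ((continuousAt_const.sub continuousAt_id).log (by norm_num)).tendsto.isBigO_one ℝ
  have hL : (fun x => (logOneSubTaylor M).eval x) =O[𝓝 0] fun _ => (1 : ℝ) :=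
    (logOneSubTaylor M).continuous.continuousAt.tendsto.isBigO_one ℝ
  have hpow : (fun x : ℝ => x ^ (M + 1)) =O[𝓝 0] fun x => x ^ (K + 1) := by
    rcases hKM.lt_or_eq with h | rfl
    · exact (isLittleO_pow_pow (by omega)).isBigO
    · exact isBigO_refl _ _
  have := (hlog.pow_sub_pow hL ((isBigO_log_one_sub_sub_logOneSubTaylor M).trans hpow) j).add
    (isBigO_eval_sub_sum_range (logOneSubTaylor M ^ j) K)
  simpa using this

theorem Polynomial.isLittleO_eval_log_natCast (p : ℝ[X]) :
    (fun n : ℕ => p.eval (log n)) =o[atTop] fun n => (n : ℝ) := by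
  have h : (fun x => p.eval (log x)) =o[atTop] fun x => x := by
    simp only [eval_eq_sum_range]
    exact IsLittleO.fun_sum fun i _ => isLittleO_pow_log_id_atTop.const_mul_left _
  exact h.comp_tendsto tendsto_natCast_atTop_atTop

theorem isLittleO_eval_add_log_one_sub_inv_sub_sum (r : ℝ[X]) {K M : ℕ} (hKM : K ≤ M) :
    (fun n : ℕ => r.eval (log n + log (1 - (n : ℝ)⁻¹)) - ∑ i ∈ Finset.range (K + 1),
        (addCompCoeff r (logOneSubTaylor M) i).eval (log n) * (n : ℝ)⁻¹ ^ i)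
      =o[atTop] fun n => (n : ℝ) * (n : ℝ)⁻¹ ^ (K + 1) := by
  simp only [eval_add_sub_sum_addCompCoeff]
  exact IsLittleO.fun_sum fun j _ => (isLittleO_eval_log_natCast _).mul_isBigO <|
    (isBigO_log_one_sub_pow_sub_sum hKM j).comp_tendsto tendsto_inv_atTop_nhds_zero_nat

theorem Real.log_natCast_sub_one {n : ℕ} (hn : 1 < n) :
    log ((n : ℝ) - 1) = log n + log (1 - (n : ℝ)⁻¹) := by
  have h : 1 - (n : ℝ)⁻¹ ≠ 0 := sub_ne_zero.mpr (inv_lt_one_of_one_lt₀ (by exact_mod_cast hn)).ne'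
  rw [← log_mul (by positivity) h, mul_sub, mul_one, mul_inv_cancel₀ (by positivity)]

theorem stmt12_general (r : Polynomial ℝ) (K : ℕ) :
    ∃ rs : ℕ → Polynomial ℝ,
      rs 1 = -derivative r ∧
      rs 2 = Polynomial.C (1 / 2 : ℝ) * (derivative (derivative r) - derivative r) ∧
      (fun n : ℕ => r.eval (Real.log ((n : ℝ) - 1)) - r.eval (Real.log n)
          - ∑ i ∈ Finset.Icc 1 K, (rs i).eval (Real.log n) / (n : ℝ) ^ i)
        =o[atTop] fun n : ℕ => 1 / (n : ℝ) ^ K := by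
  have hL0 := coeff_logOneSubTaylor_zero (K + 2)
  have hL1 : (logOneSubTaylor (K + 2)).coeff 1 = -1 := by
    simpa using coeff_logOneSubTaylor_succ (M := K + 2) (i := 0) (by omega)
  have hL2 : (logOneSubTaylor (K + 2)).coeff 2 = -1 / 2 := by
    simpa [one_add_one_eq_two] using coeff_logOneSubTaylor_succ (M := K + 2) (i := 1) (by omega)
  refine ⟨addCompCoeff r (logOneSubTaylor (K + 2)), ?_, ?_, ?_⟩
  · simp [addCompCoeff_one r hL0, hL1]
  · rw [addCompCoeff_two r hL0, hL1, hL2, ← two_smul_hasseDeriv_two, nsmul_eq_mul, mul_sub,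
      ← mul_assoc, Nat.cast_ofNat, ← C_ofNat, ← C_mul]
    norm_num
    ring
  · refine (isLittleO_eval_add_log_one_sub_inv_sub_sum r (by omega : K ≤ K + 2)).congr' ?_ ?_
    · filter_upwards [eventually_gt_atTop 1] with n hn
      rw [log_natCast_sub_one hn, Finset.range_eq_Ico, Finset.sum_eq_sum_Ico_succ_bot (by omega),
        Finset.Ico_add_one_right_eq_Icc, addCompCoeff_zero r hL0]
      simp [div_eq_mul_inv, sub_sub]
    · filter_upwards [eventually_ne_atTop 0] with n hn
      rw [inv_pow, pow_succ]
      field_simp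

theorem stmt12 (r : Polynomial ℝ) (K : ℕ) (hK : 1 ≤ K) :
    ∃ rs : ℕ → Polynomial ℝ,
      rs 1 = -derivative r ∧
      rs 2 = Polynomial.C (1 / 2 : ℝ) * (derivative (derivative r) - derivative r) ∧
      (fun n : ℕ => r.eval (Real.log ((n : ℝ) - 1)) - r.eval (Real.log n)
          - ∑ i ∈ Finset.Icc 1 K, (rs i).eval (Real.log n) / (n : ℝ) ^ i)
        =o[atTop] fun n : ℕ => 1 / (n : ℝ) ^ K :=
  stmt12_general r K
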